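/- arXiv:2107.02797 — 3 statements merged into one kernel-verified Lean document; each statement's English description precedes it below -/
import Mathlib

section
/- Let û ∈ U be a minimizer of L^TV over U and let φ̂ ∈ V be a δ-minimizer of L^TV over V. Suppose (approximation assumption) there exists ψ ∈ V with ‖ψ − û‖_{H¹(ρ)} ≤ A for some A ≥ 0. Then 0 ≤ L^TV(φ̂) − L^TV(û) ≤ (λ+1)·A + δ. -/
open MeasureTheory

noncomputable section

/-- Frobenius norm of a `d × n` array of real numbers. -/
def frobNorm {d n : ℕ} (M : Fin d → Fin n → ℝ) : ℝ :=
  Real.sqrt (∑ j, ∑ i, (M j i) ^ 2)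

/-- The Jacobian of `u : ℝᵈ → ℝⁿ` at `x`, recorded as the array whose `(j, i)` entry is
the derivative of the `i`-th component of `u` in the `j`-th coordinate direction. -/
def jacobian {d n : ℕ} (u : EuclideanSpace ℝ (Fin d) → EuclideanSpace ℝ (Fin n))
    (x : EuclideanSpace ℝ (Fin d)) : Fin d → Fin n → ℝ :=
  fun j i => fderiv ℝ u x (EuclideanSpace.single j 1) i

/-- The TV-regularized expected loss `L^TV(u) = E_ρ[D(u(x), y(x)) + |∇u(x)|]`. -/
def LTV {d n : ℕ} (ρ : Measure (EuclideanSpace ℝ (Fin d)))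
    (D : EuclideanSpace ℝ (Fin n) → EuclideanSpace ℝ (Fin n) → ℝ)
    (y : EuclideanSpace ℝ (Fin d) → EuclideanSpace ℝ (Fin n))
    (u : EuclideanSpace ℝ (Fin d) → EuclideanSpace ℝ (Fin n)) : ℝ :=
  ∫ x, (D (u x) (y x) + frobNorm (jacobian u x)) ∂ρ

/-- Squared weighted `H¹(ρ)` distance: `E_ρ[|u-v|² + |∇u-∇v|²]`. -/
def H1distSq {d n : ℕ} (ρ : Measure (EuclideanSpace ℝ (Fin d)))
    (u v : EuclideanSpace ℝ (Fin d) → EuclideanSpace ℝ (Fin n)) : ℝ :=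
  ∫ x, (‖u x - v x‖ ^ 2 + (frobNorm (jacobian u x - jacobian v x)) ^ 2) ∂ρ

-- frobNorm as Euclidean norm
lemma frobNorm_eq {d n : ℕ} (M : Fin d → Fin n → ℝ) :
    frobNorm M = ‖((WithLp.equiv 2 ((Fin d × Fin n) → ℝ)).symm (fun p => M p.1 p.2) :
      EuclideanSpace ℝ (Fin d × Fin n))‖ := by
  rw [EuclideanSpace.norm_eq, frobNorm]
  congr 1
  rw [Fintype.sum_prod_type]
  simp [sq_abs]

lemma frobNorm_nonneg {d n : ℕ} (M : Fin d → Fin n → ℝ) : 0 ≤ frobNorm M :=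
  Real.sqrt_nonneg _

lemma frobNorm_sub_le {d n : ℕ} (M N : Fin d → Fin n → ℝ) :
    frobNorm M - frobNorm N ≤ frobNorm (M - N) := by
  rw [frobNorm_eq, frobNorm_eq, frobNorm_eq]
  have : ((WithLp.equiv 2 ((Fin d × Fin n) → ℝ)).symm (fun p => (M - N) p.1 p.2) :
      EuclideanSpace ℝ (Fin d × Fin n)) =
      (WithLp.equiv 2 ((Fin d × Fin n) → ℝ)).symm (fun p => M p.1 p.2) -
      (WithLp.equiv 2 ((Fin d × Fin n) → ℝ)).symm (fun p => N p.1 p.2) := rfl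
  rw [this]
  exact norm_sub_norm_le _ _

lemma measurable_frobJac {d n : ℕ}
    (u v : EuclideanSpace ℝ (Fin d) → EuclideanSpace ℝ (Fin n)) :
    Measurable (fun x => frobNorm (jacobian u x - jacobian v x)) := by
  apply Real.continuous_sqrt.measurable.comp
  apply Finset.measurable_sum
  intro j _
  apply Finset.measurable_sum
  intro i _
  have h1 : Measurable (fun x => jacobian u x j i) :=
    ((EuclideanSpace.proj i : EuclideanSpace ℝ (Fin n) →L[ℝ] ℝ).continuous.measurable).comp
      (measurable_fderiv_apply_const ℝ u (EuclideanSpace.single j 1))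
  have h2 : Measurable (fun x => jacobian v x j i) :=
    ((EuclideanSpace.proj i : EuclideanSpace ℝ (Fin n) →L[ℝ] ℝ).continuous.measurable).comp
      (measurable_fderiv_apply_const ℝ v (EuclideanSpace.single j 1))
  exact ((h1.sub h2).pow_const 2)

lemma sqrt_le_half_one_add {y : ℝ} (hy : 0 ≤ y) : Real.sqrt y ≤ (1 + y) / 2 := by
  nlinarith [Real.sq_sqrt hy, sq_nonneg (Real.sqrt y - 1)]

lemma integral_le_sqrt_integral_sq {α : Type*} [MeasurableSpace α]
    {μ : Measure α} [IsProbabilityMeasure μ] {f : α → ℝ}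
    (hmeas : Measurable f) (hpos : ∀ x, 0 ≤ f x)
    (hint : Integrable (fun x => f x ^ 2) μ) :
    ∫ x, f x ∂μ ≤ Real.sqrt (∫ x, f x ^ 2 ∂μ) := by
  have hconj : Real.HolderConjugate 2 2 := Real.holderConjugate_iff.mpr ⟨one_lt_two, by norm_num⟩
  have hf2 : MemLp f 2 μ :=
    (memLp_two_iff_integrable_sq hmeas.aestronglyMeasurable).2 hint
  have hg2 : MemLp (fun _ : α => (1:ℝ)) 2 μ := memLp_const 1
  have h := integral_mul_le_Lp_mul_Lq_of_nonneg (μ := μ) hconj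
    (Filter.Eventually.of_forall hpos)
    (Filter.Eventually.of_forall (fun _ => zero_le_one))
    (by simpa using hf2) (by simpa using hg2)
  simp only [mul_one] at h
  calc ∫ x, f x ∂μ ≤ (∫ x, f x ^ (2:ℝ) ∂μ) ^ (1/2:ℝ) * (∫ _x, (1:ℝ) ^ (2:ℝ) ∂μ) ^ (1/2:ℝ) := h
    _ = Real.sqrt (∫ x, f x ^ 2 ∂μ) := by
        have e1 : ∀ x:ℝ, x ^ (2:ℝ) = x ^ 2 := fun x => by
          rw [show (2:ℝ)=((2:ℕ):ℝ) by norm_num, Real.rpow_natCast]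
        simp only [e1, one_pow, integral_const, measure_univ, probReal_univ, ENNReal.toReal_one, smul_eq_mul,
          one_mul, Real.one_rpow, mul_one]
        rw [← Real.sqrt_eq_rpow]

theorem stmt0 {d n : ℕ}
    (Ω : Set (EuclideanSpace ℝ (Fin d)))
    (ρ : Measure (EuclideanSpace ℝ (Fin d))) [IsProbabilityMeasure ρ]
    (hρΩ : ρ Ωᶜ = 0)
    (y : EuclideanSpace ℝ (Fin d) → EuclideanSpace ℝ (Fin n)) (hy : Measurable y)
    (D : EuclideanSpace ℝ (Fin n) → EuclideanSpace ℝ (Fin n) → ℝ)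
    (lam : ℝ) (hlam : 0 < lam)
    (hLip : ∀ u₁ u₂ w, |D u₁ w - D u₂ w| ≤ lam * ‖u₁ - u₂‖)
    (U V : Set (EuclideanSpace ℝ (Fin d) → EuclideanSpace ℝ (Fin n)))
    (hVU : V ⊆ U) (hUdiff : ∀ u ∈ U, Differentiable ℝ u)
    -- all expectations appearing are assumed finite
    (hIntD : ∀ u ∈ U, Integrable (fun x => D (u x) (y x) + frobNorm (jacobian u x)) ρ)
    (hIntH : ∀ u ∈ U, ∀ v ∈ U,
      Integrable (fun x => ‖u x - v x‖ ^ 2 + (frobNorm (jacobian u x - jacobian v x)) ^ 2) ρ)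
    -- `û` is a minimizer of `L^TV` over `U`
    (uhat : EuclideanSpace ℝ (Fin d) → EuclideanSpace ℝ (Fin n))
    (huhatU : uhat ∈ U) (huhatMin : ∀ u ∈ U, LTV ρ D y uhat ≤ LTV ρ D y u)
    -- `φ̂` is a `δ`-minimizer of `L^TV` over `V`
    (δ : ℝ) (hδ : 0 ≤ δ)
    (φhat : EuclideanSpace ℝ (Fin d) → EuclideanSpace ℝ (Fin n))
    (hφV : φhat ∈ V) (hφMin : ∀ φ ∈ V, LTV ρ D y φhat ≤ LTV ρ D y φ + δ)
    -- approximation assumption: some `ψ ∈ V` is `A`-close to `û` in `H¹(ρ)`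
    (A : ℝ) (hA : 0 ≤ A)
    (happrox : ∃ ψ ∈ V, Real.sqrt (H1distSq ρ ψ uhat) ≤ A) :
    0 ≤ LTV ρ D y φhat - LTV ρ D y uhat ∧
      LTV ρ D y φhat - LTV ρ D y uhat ≤ (lam + 1) * A + δ := by
  obtain ⟨ψ, hψV, hψA⟩ := happrox
  have hψU : ψ ∈ U := hVU hψV
  set a : EuclideanSpace ℝ (Fin d) → ℝ := fun x => ‖ψ x - uhat x‖ with ha_def
  set b : EuclideanSpace ℝ (Fin d) → ℝ :=
    fun x => frobNorm (jacobian ψ x - jacobian uhat x) with hb_def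
  set g : EuclideanSpace ℝ (Fin d) → ℝ := fun x => a x ^ 2 + b x ^ 2 with hg_def
  have hgint : Integrable g ρ := hIntH ψ hψU uhat huhatU
  have hgpos : ∀ x, 0 ≤ g x := fun x => by positivity
  have hameas : Measurable a :=
    (((hUdiff ψ hψU).continuous.sub (hUdiff uhat huhatU).continuous).measurable).norm
  have hbmeas : Measurable b := measurable_frobJac ψ uhat
  have hfmeas : Measurable (fun x => Real.sqrt (g x)) :=
    Real.continuous_sqrt.measurable.comp ((hameas.pow_const 2).add (hbmeas.pow_const 2))
  have hfint : Integrable (fun x => Real.sqrt (g x)) ρ := by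
    refine Integrable.mono' (((integrable_const (1:ℝ)).add hgint).div_const 2)
      hfmeas.aestronglyMeasurable (Filter.Eventually.of_forall fun x => ?_)
    rw [Real.norm_of_nonneg (Real.sqrt_nonneg _)]
    exact sqrt_le_half_one_add (hgpos x)
  have hf2int : Integrable (fun x => Real.sqrt (g x) ^ 2) ρ :=
    hgint.congr (Filter.Eventually.of_forall fun x => (Real.sq_sqrt (hgpos x)).symm)
  have hf2eq : ∫ x, Real.sqrt (g x) ^ 2 ∂ρ = ∫ x, g x ∂ρ :=
    integral_congr_ae (Filter.Eventually.of_forall fun x => Real.sq_sqrt (hgpos x))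
  have hstep2 : ∫ x, Real.sqrt (g x) ∂ρ ≤ A := by
    calc ∫ x, Real.sqrt (g x) ∂ρ ≤ Real.sqrt (∫ x, Real.sqrt (g x) ^ 2 ∂ρ) :=
          integral_le_sqrt_integral_sq hfmeas (fun x => Real.sqrt_nonneg _) hf2int
      _ = Real.sqrt (H1distSq ρ ψ uhat) := by rw [hf2eq]; rfl
      _ ≤ A := hψA
  have key : LTV ρ D y ψ - LTV ρ D y uhat ≤ (lam + 1) * A := by
    have h1 : LTV ρ D y ψ - LTV ρ D y uhat =
        ∫ x, ((D (ψ x) (y x) + frobNorm (jacobian ψ x)) -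
          (D (uhat x) (y x) + frobNorm (jacobian uhat x))) ∂ρ := by
      rw [LTV, LTV, integral_sub (hIntD ψ hψU) (hIntD uhat huhatU)]
    have hpt : ∀ x, (D (ψ x) (y x) + frobNorm (jacobian ψ x)) -
        (D (uhat x) (y x) + frobNorm (jacobian uhat x)) ≤ (lam + 1) * Real.sqrt (g x) := by
      intro x
      have hd : D (ψ x) (y x) - D (uhat x) (y x) ≤ lam * a x :=
        (le_abs_self _).trans (hLip (ψ x) (uhat x) (y x))
      have hfr : frobNorm (jacobian ψ x) - frobNorm (jacobian uhat x) ≤ b x :=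
        frobNorm_sub_le _ _
      have has : a x ≤ Real.sqrt (g x) := by
        rw [show a x = Real.sqrt (a x ^ 2) from (Real.sqrt_sq (norm_nonneg _)).symm]
        exact Real.sqrt_le_sqrt (le_add_of_nonneg_right (sq_nonneg (b x)))
      have hbs : b x ≤ Real.sqrt (g x) := by
        rw [show b x = Real.sqrt (b x ^ 2) from (Real.sqrt_sq (frobNorm_nonneg _)).symm]
        exact Real.sqrt_le_sqrt (le_add_of_nonneg_left (sq_nonneg (a x)))
      nlinarith [hlam.le]
    have h2 : ∫ x, ((D (ψ x) (y x) + frobNorm (jacobian ψ x)) -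
          (D (uhat x) (y x) + frobNorm (jacobian uhat x))) ∂ρ ≤
        ∫ x, (lam + 1) * Real.sqrt (g x) ∂ρ :=
      integral_mono ((hIntD ψ hψU).sub (hIntD uhat huhatU)) (hfint.const_mul _) hpt
    have h3 : ∫ x, (lam + 1) * Real.sqrt (g x) ∂ρ = (lam + 1) * ∫ x, Real.sqrt (g x) ∂ρ :=
      integral_const_mul _ _
    have h4 : (lam + 1) * ∫ x, Real.sqrt (g x) ∂ρ ≤ (lam + 1) * A :=
      mul_le_mul_of_nonneg_left hstep2 (by linarith)
    linarith [h1 ▸ h2.trans (h3 ▸ h4)]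
  constructor
  · linarith [huhatMin φhat (hVU hφV)]
  · have h5 := hφMin ψ hψV
    linarith
end
end

section
/- Let g ∈ C²([−1,1]) satisfy ‖g^{(s)}‖_{L^∞([−1,1])} ≤ B for s = 0,1,2 and g'(0) = 0. Then for every m ∈ ℕ⁺ there exists a one-dimensional two-layer ReLU network g_m(z) = c + (1/(2m)) Σ_{k=1}^{2m} a_k·ReLU(ε_k z + b_k), with c = g(0), |a_k| ≤ 4B, ε_k ∈ {−1,1} and |b_k| ≤ 1 for each k, such that ‖g − g_m‖_{W^{1,∞}([−1,1])} ≤ 2B/m. -/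
open MeasureTheory

noncomputable section

set_option maxHeartbeats 4000000 in
theorem stmt13 (B : ℝ) (g : ℝ → ℝ)
    -- `g ∈ C²([-1,1])` with `‖g⁽ˢ⁾‖_∞ ≤ B` for `s = 0, 1, 2` and `g'(0) = 0`
    (hg : ContDiffOn ℝ 2 g (Set.Icc (-1) 1))
    (hbound : ∀ s ∈ Finset.range 3, ∀ z ∈ Set.Icc (-1 : ℝ) 1,
      |iteratedDerivWithin s g (Set.Icc (-1) 1) z| ≤ B)
    (hg'0 : derivWithin g (Set.Icc (-1 : ℝ) 1) 0 = 0)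
    (m : ℕ) (hm : 0 < m) :
    -- there is a two-layer ReLU network `g_m(z) = g(0) + (1/(2m)) Σ a_k ReLU(ε_k z + b_k)`
    ∃ a b εk : Fin (2 * m) → ℝ,
      (∀ k, |a k| ≤ 4 * B) ∧ (∀ k, εk k = 1 ∨ εk k = -1) ∧ (∀ k, |b k| ≤ 1) ∧
      -- `‖g - g_m‖_{W^{1,∞}([-1,1])} ≤ 2B/m`: uniform closeness of the values …
      (∀ z ∈ Set.Icc (-1 : ℝ) 1,
        |g z - (g 0 + (1 / (2 * (m : ℝ))) * ∑ k, a k * max (εk k * z + b k) 0)| ≤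
          2 * B / m) ∧
      -- … and (almost-everywhere) closeness of the derivatives
      (∀ᵐ z ∂(volume.restrict (Set.Icc (-1 : ℝ) 1)),
        |derivWithin g (Set.Icc (-1) 1) z -
            derivWithin
              (fun z => g 0 + (1 / (2 * (m : ℝ))) * ∑ k, a k * max (εk k * z + b k) 0)
              (Set.Icc (-1) 1) z| ≤ 2 * B / m) := by
  classical
  set S : Set ℝ := Set.Icc (-1 : ℝ) 1 with hSdef
  set M : ℝ := (m : ℝ) with hMdef
  have hM : 0 < M := by rw [hMdef]; exact_mod_cast hm
  have hM1 : 1 ≤ M := by rw [hMdef]; exact_mod_cast hm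
  have huniq : UniqueDiffOn ℝ S := uniqueDiffOn_Icc (by norm_num)
  set g1 : ℝ → ℝ := derivWithin g S with hg1def
  have hmem0 : (0 : ℝ) ∈ S := by constructor <;> norm_num
  have hB0 : 0 ≤ B := by
    have h := hbound 0 (by norm_num) 0 hmem0
    simp only [iteratedDerivWithin_zero] at h
    exact le_trans (abs_nonneg _) h
  have hdiff : DifferentiableOn ℝ g S := hg.differentiableOn (by norm_num)
  have hder : ∀ z ∈ S, HasDerivWithinAt g (g1 z) S z :=
    fun z hz => (hdiff z hz).hasDerivWithinAt
  have hc1 : ContDiffOn ℝ 1 g1 S := hg.derivWithin huniq (by norm_num)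
  have hder1 : ∀ z ∈ S, HasDerivWithinAt g1 (derivWithin g1 S z) S z :=
    fun z hz => ((hc1.differentiableOn one_ne_zero) z hz).hasDerivWithinAt
  have hbound2 : ∀ z ∈ S, |derivWithin g1 S z| ≤ B := by
    intro z hz
    have h2 := hbound 2 (by norm_num) z hz
    have heq : iteratedDerivWithin 2 g S z = derivWithin g1 S z := by
      rw [show (2 : ℕ) = 1 + 1 from rfl, iteratedDerivWithin_succ]
      apply derivWithin_congr
      · intro y hy; exact congrFun iteratedDerivWithin_one y
      · exact congrFun iteratedDerivWithin_one z
    rwa [heq] at h2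
  -- Lipschitz bound for g1
  have hlip : ∀ x ∈ S, ∀ y ∈ S, |g1 x - g1 y| ≤ B * |x - y| := by
    intro x hx y hy
    have h := Convex.norm_image_sub_le_of_norm_hasDerivWithin_le
      (fun z hz => hder1 z hz) (fun z hz => by simpa [Real.norm_eq_abs] using hbound2 z hz)
      (convex_Icc (-1 : ℝ) 1) hy hx
    simpa [Real.norm_eq_abs] using h
  -- mean value inequality
  have key : ∀ u v, u ∈ S → v ∈ S → u ≤ v → ∀ c C, (∀ t ∈ Set.Icc u v, |g1 t - c| ≤ C) →
      |g v - g u - c * (v - u)| ≤ C * (v - u) := by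
    intro u v hu hv huv c C hC
    have hsub : Set.Icc u v ⊆ S := Set.Icc_subset_Icc hu.1 hv.2
    have hder' : ∀ t ∈ Set.Icc u v,
        HasDerivWithinAt (fun t => g t - c * t) (g1 t - c) (Set.Icc u v) t := by
      intro t ht
      have h1 : HasDerivWithinAt g (g1 t) (Set.Icc u v) t := (hder t (hsub ht)).mono hsub
      have h2 : HasDerivAt (fun t : ℝ => c * t) c t := by
        simpa using (hasDerivAt_id t).const_mul c
      exact h1.sub h2.hasDerivWithinAt
    have h := Convex.norm_image_sub_le_of_norm_hasDerivWithin_le hder'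
      (fun t ht => by simpa [Real.norm_eq_abs] using hC t ht) (convex_Icc u v)
      ⟨le_rfl, huv⟩ ⟨huv, le_rfl⟩
    rw [Real.norm_eq_abs, Real.norm_eq_abs, abs_of_nonneg (by linarith : (0:ℝ) ≤ v - u)] at h
    have heq : g v - g u - c * (v - u) = (g v - c * v) - (g u - c * u) := by ring
    rw [heq]
    exact h
  -- the network pieces
  set d : ℕ → ℝ := fun i => g1 ((i : ℝ) / M) with hddef
  set e : ℕ → ℝ := fun i => - g1 (-((i : ℝ) / M)) with hedef
  have hd0 : d 0 = 0 := by simp only [hddef, Nat.cast_zero, zero_div]; exact hg'0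
  have he0 : e 0 = 0 := by simp only [hedef, Nat.cast_zero, zero_div, neg_zero, hg'0]
  set aP : ℕ → ℝ := fun i => 2 * M * (d i - d (i - 1)) with haPdef
  set aN : ℕ → ℝ := fun i => 2 * M * (e i - e (i - 1)) with haNdef
  have sumP : ∀ k, (∑ i ∈ Finset.range (k + 1), aP i) = 2 * M * d k := by
    intro k
    induction k with
    | zero => simp [haPdef, hd0]
    | succ k ih => rw [Finset.sum_range_succ, ih]; simp [haPdef]; ring
  have sumN : ∀ k, (∑ i ∈ Finset.range (k + 1), aN i) = 2 * M * e k := by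
    intro k
    induction k with
    | zero => simp [haNdef, he0]
    | succ k ih => rw [Finset.sum_range_succ, ih]; simp [haNdef]; ring
  set NN : ℝ → ℝ := fun z => (∑ i ∈ Finset.range m, aP i * max (z - (i : ℝ) / M) 0)
      + (∑ i ∈ Finset.range m, aN i * max (-z - (i : ℝ) / M) 0) with hNNdef
  set gm : ℝ → ℝ := fun z => g 0 + (1 / (2 * M)) * NN z with hgmdef
  -- node membership
  have hnode : ∀ k : ℕ, k ≤ m → ((k : ℝ) / M) ∈ S := by
    intro k hk
    have h0 : (0:ℝ) ≤ (k:ℝ)/M := by positivity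
    constructor
    · linarith
    · rw [div_le_one hM, hMdef]; exact_mod_cast hk
  have hnodeN : ∀ k : ℕ, k ≤ m → (-((k : ℝ) / M)) ∈ S := by
    intro k hk
    have := hnode k hk
    constructor
    · simpa using neg_le_neg this.2
    · exact le_trans (neg_nonpos.mpr (by positivity)) (by norm_num)
  -- vanishing / classification lemmas for the ReLU sums
  have zer : ∀ (c : ℕ → ℝ) (w : ℝ), w ≤ 0 →
      (∑ i ∈ Finset.range m, c i * max (w - (i : ℝ) / M) 0) = 0 := by
    intro c w hw
    apply Finset.sum_eq_zero
    intro i _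
    have h1 : w - (i : ℝ) / M ≤ 0 := by
      have : (0:ℝ) ≤ (i : ℝ) / M := by positivity
      linarith
    rw [max_eq_right h1, mul_zero]
  have core : ∀ k, k < m → ∀ (c : ℕ → ℝ), ∀ u v, (k : ℝ) / M ≤ u → u ≤ ((k : ℝ) + 1) / M →
      (k : ℝ) / M ≤ v → v ≤ ((k : ℝ) + 1) / M →
      (∑ i ∈ Finset.range m, c i * max (u - (i : ℝ) / M) 0)
        - (∑ i ∈ Finset.range m, c i * max (v - (i : ℝ) / M) 0)
        = (∑ i ∈ Finset.range (k + 1), c i) * (u - v) := by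
    intro k hk c u v hu1 hu2 hv1 hv2
    have hclass : ∀ w, (k : ℝ) / M ≤ w → w ≤ ((k : ℝ) + 1) / M → ∀ i : ℕ,
        max (w - (i : ℝ) / M) 0 = if i ≤ k then w - (i : ℝ) / M else 0 := by
      intro w hw1 hw2 i
      by_cases hik : i ≤ k
      · rw [if_pos hik]
        apply max_eq_left
        have h1 : (i : ℝ) ≤ (k : ℝ) := by exact_mod_cast hik
        have h2 : (i : ℝ) / M ≤ (k : ℝ) / M := by gcongr
        linarith
      · rw [if_neg hik]
        apply max_eq_right
        have h1 : (k : ℝ) + 1 ≤ (i : ℝ) := by exact_mod_cast (Nat.succ_le_of_lt (lt_of_not_ge hik))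
        have h2 : ((k : ℝ) + 1) / M ≤ (i : ℝ) / M := by gcongr
        linarith
    calc (∑ i ∈ Finset.range m, c i * max (u - (i : ℝ) / M) 0)
          - (∑ i ∈ Finset.range m, c i * max (v - (i : ℝ) / M) 0)
        = ∑ i ∈ Finset.range m, (if i ≤ k then c i * (u - v) else 0) := by
          rw [← Finset.sum_sub_distrib]
          apply Finset.sum_congr rfl
          intro i _
          rw [hclass u hu1 hu2 i, hclass v hv1 hv2 i]
          by_cases hik : i ≤ k
          · simp only [if_pos hik]; ring
          · simp only [if_neg hik]; ring
      _ = ∑ i ∈ Finset.range (k + 1), (if i ≤ k then c i * (u - v) else 0) :=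
          (Finset.sum_subset (Finset.range_subset_range.mpr hk)
            (fun i _ hi => if_neg (fun h => hi (Finset.mem_range.mpr (Nat.lt_succ_of_le h))))).symm
      _ = ∑ i ∈ Finset.range (k + 1), c i * (u - v) :=
          Finset.sum_congr rfl (fun i hi => if_pos (Nat.lt_succ_iff.mp (Finset.mem_range.mp hi)))
      _ = (∑ i ∈ Finset.range (k + 1), c i) * (u - v) := (Finset.sum_mul _ _ _).symm
  -- slope lemmas
  have slopeP : ∀ k, k < m → ∀ x y, (k : ℝ) / M ≤ x → x ≤ ((k : ℝ) + 1) / M →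
      (k : ℝ) / M ≤ y → y ≤ ((k : ℝ) + 1) / M → gm x - gm y = d k * (x - y) := by
    intro k hk x y hx1 hx2 hy1 hy2
    have hx0 : 0 ≤ x := le_trans (by positivity) hx1
    have hy0 : 0 ≤ y := le_trans (by positivity) hy1
    have hNN : NN x - NN y = 2 * M * d k * (x - y) := by
      simp only [hNNdef]
      have hz1 := zer aN (-x) (by linarith)
      have hz2 := zer aN (-y) (by linarith)
      have hc := core k hk aP x y hx1 hx2 hy1 hy2
      rw [sumP] at hc
      have hrw : ∀ w : ℝ, (∑ i ∈ Finset.range m, aN i * max (-w - (i : ℝ) / M) 0)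
          = (∑ i ∈ Finset.range m, aN i * max ((-w) - (i : ℝ) / M) 0) := by
        intro w; apply Finset.sum_congr rfl; intro i _; norm_num
      rw [hrw x, hrw y, hz1, hz2]
      linarith [hc]
    have h2 : (1 / (2 * M)) * (NN x - NN y) = d k * (x - y) := by
      rw [hNN]; field_simp
    simp only [hgmdef]
    linear_combination h2
  have slopeN : ∀ k, k < m → ∀ x y, -(((k : ℝ) + 1) / M) ≤ x → x ≤ -((k : ℝ) / M) →
      -(((k : ℝ) + 1) / M) ≤ y → y ≤ -((k : ℝ) / M) → gm x - gm y = g1 (-((k : ℝ) / M)) * (x - y) := by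
    intro k hk x y hx1 hx2 hy1 hy2
    have hkM0 : (0:ℝ) ≤ (k : ℝ) / M := by positivity
    have hx0 : x ≤ 0 := le_trans hx2 (by linarith)
    have hy0 : y ≤ 0 := le_trans hy2 (by linarith)
    have hNN : NN x - NN y = 2 * M * e k * (y - x) := by
      simp only [hNNdef]
      have hz1 := zer aP x hx0
      have hz2 := zer aP y hy0
      have hc := core k hk aN (-x) (-y) (by linarith) (by linarith) (by linarith) (by linarith)
      rw [sumN] at hc
      have hrw : ∀ w : ℝ, (∑ i ∈ Finset.range m, aN i * max (-w - (i : ℝ) / M) 0)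
          = (∑ i ∈ Finset.range m, aN i * max ((-w) - (i : ℝ) / M) 0) := by
        intro w; apply Finset.sum_congr rfl; intro i _; norm_num
      rw [hrw x, hrw y, hz1, hz2]
      linarith [hc]
    have hek : e k = - g1 (-((k : ℝ) / M)) := by simp only [hedef]
    have h2 : (1 / (2 * M)) * (NN x - NN y) = g1 (-((k : ℝ) / M)) * (x - y) := by
      rw [hNN, hek]; field_simp; ring
    simp only [hgmdef]
    linear_combination h2
  have gm0 : gm 0 = g 0 := by
    have h1 : NN 0 = 0 := by
      simp only [hNNdef]
      have e1 : (∑ i ∈ Finset.range m, aP i * max ((0:ℝ) - (i : ℝ) / M) 0) = 0 := zer aP 0 le_rfl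
      have e2 : (∑ i ∈ Finset.range m, aN i * max (-(0:ℝ) - (i : ℝ) / M) 0) = 0 := by
        apply Finset.sum_eq_zero
        intro i _
        have h1 : -(0:ℝ) - (i : ℝ) / M ≤ 0 := by
          have : (0:ℝ) ≤ (i : ℝ) / M := by positivity
          linarith
        rw [max_eq_right h1, mul_zero]
      rw [e1, e2, add_zero]
    simp only [hgmdef]
    rw [h1, mul_zero, add_zero]
  -- interval step lemmas
  have stepP : ∀ k, k < m → ∀ z, (k : ℝ) / M ≤ z → z ≤ ((k : ℝ) + 1) / M →
      |g z - gm z| ≤ |g ((k : ℝ) / M) - gm ((k : ℝ) / M)| + B / M ^ 2 := by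
    intro k hk z hz1 hz2
    have hkm : (k : ℝ) + 1 ≤ M := by
      rw [hMdef]; exact_mod_cast Nat.succ_le_of_lt hk
    have hpS : ((k : ℝ) / M) ∈ S := hnode k (le_of_lt hk)
    have hint : ((k : ℝ) + 1) / M ≤ 1 := by rw [div_le_one hM]; linarith
    have hzS : z ∈ S := ⟨le_trans hpS.1 hz1, le_trans hz2 hint⟩
    have hdk : gm z - gm ((k : ℝ) / M) = d k * (z - (k : ℝ) / M) :=
      slopeP k hk z ((k : ℝ) / M) hz1 hz2 le_rfl (by gcongr; linarith)
    have hzk : z - (k : ℝ) / M ≤ 1 / M := by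
      have h : ((k : ℝ) + 1) / M - (k : ℝ) / M = 1 / M := by ring
      linarith
    have hmvt : |g z - g ((k : ℝ) / M) - d k * (z - (k : ℝ) / M)| ≤ (B / M) * (z - (k : ℝ) / M) := by
      apply key ((k : ℝ) / M) z hpS hzS hz1 (d k) (B / M)
      intro t ht
      have htS : t ∈ S := ⟨le_trans hpS.1 ht.1, le_trans ht.2 hzS.2⟩
      have h := hlip t htS ((k : ℝ) / M) hpS
      have habs : |t - (k : ℝ) / M| ≤ 1 / M := by
        rw [abs_of_nonneg (by linarith [ht.1])]
        linarith [ht.2]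
      have hdk' : d k = g1 ((k : ℝ) / M) := by simp only [hddef]
      rw [hdk']
      calc |g1 t - g1 ((k : ℝ) / M)| ≤ B * |t - (k : ℝ) / M| := h
        _ ≤ B * (1 / M) := mul_le_mul_of_nonneg_left habs hB0
        _ = B / M := by ring
    have h3 : g z - gm z = (g ((k : ℝ) / M) - gm ((k : ℝ) / M))
        + (g z - g ((k : ℝ) / M) - d k * (z - (k : ℝ) / M)) := by linarith [hdk]
    have h4 : (B / M) * (z - (k : ℝ) / M) ≤ B / M ^ 2 := by
      have h5 : 0 ≤ B / M := by positivity
      have h6 : (B / M) * (1 / M) = B / M ^ 2 := by ring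
      nlinarith [hz1, hpS.1]
    calc |g z - gm z| ≤ |g ((k : ℝ) / M) - gm ((k : ℝ) / M)|
          + |g z - g ((k : ℝ) / M) - d k * (z - (k : ℝ) / M)| := by rw [h3]; exact abs_add_le _ _
      _ ≤ |g ((k : ℝ) / M) - gm ((k : ℝ) / M)| + B / M ^ 2 := by linarith [hmvt]
  have stepN : ∀ k, k < m → ∀ z, -(((k : ℝ) + 1) / M) ≤ z → z ≤ -((k : ℝ) / M) →
      |g z - gm z| ≤ |g (-((k : ℝ) / M)) - gm (-((k : ℝ) / M))| + B / M ^ 2 := by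
    intro k hk z hz1 hz2
    have hkm : (k : ℝ) + 1 ≤ M := by
      rw [hMdef]; exact_mod_cast Nat.succ_le_of_lt hk
    have hpS : (-((k : ℝ) / M)) ∈ S := hnodeN k (le_of_lt hk)
    have hint : ((k : ℝ) + 1) / M ≤ 1 := by rw [div_le_one hM]; linarith
    have hzS : z ∈ S := ⟨by linarith, le_trans hz2 hpS.2⟩
    have hdk : gm z - gm (-((k : ℝ) / M)) = g1 (-((k : ℝ) / M)) * (z - (-((k : ℝ) / M))) :=
      slopeN k hk z (-((k : ℝ) / M)) hz1 hz2 (by gcongr; linarith) le_rfl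
    set σ : ℝ := g1 (-((k : ℝ) / M)) with hσ
    have hzk : -((k : ℝ) / M) - z ≤ 1 / M := by
      have h : ((k : ℝ) + 1) / M - (k : ℝ) / M = 1 / M := by ring
      linarith
    have hmvt : |g (-((k : ℝ) / M)) - g z - σ * ((-((k : ℝ) / M)) - z)| ≤ (B / M) * ((-((k : ℝ) / M)) - z) := by
      apply key z (-((k : ℝ) / M)) hzS hpS hz2 σ (B / M)
      intro t ht
      have htS : t ∈ S := ⟨le_trans hzS.1 ht.1, le_trans ht.2 hpS.2⟩
      have h := hlip t htS (-((k : ℝ) / M)) hpS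
      have habs : |t - (-((k : ℝ) / M))| ≤ 1 / M := by
        rw [abs_of_nonpos (by linarith [ht.2])]
        linarith [ht.1]
      calc |g1 t - σ| ≤ B * |t - (-((k : ℝ) / M))| := h
        _ ≤ B * (1 / M) := mul_le_mul_of_nonneg_left habs hB0
        _ = B / M := by ring
    have h3 : g z - gm z = (g (-((k : ℝ) / M)) - gm (-((k : ℝ) / M)))
        + (-(g (-((k : ℝ) / M)) - g z - σ * ((-((k : ℝ) / M)) - z))) := by linarith [hdk]
    have h4 : (B / M) * ((-((k : ℝ) / M)) - z) ≤ B / M ^ 2 := by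
      have h5 : 0 ≤ B / M := by positivity
      have h6 : (B / M) * (1 / M) = B / M ^ 2 := by ring
      nlinarith [hz2]
    calc |g z - gm z| ≤ |g (-((k : ℝ) / M)) - gm (-((k : ℝ) / M))|
          + |(-(g (-((k : ℝ) / M)) - g z - σ * ((-((k : ℝ) / M)) - z)))| := by rw [h3]; exact abs_add_le _ _
      _ ≤ |g (-((k : ℝ) / M)) - gm (-((k : ℝ) / M))| + B / M ^ 2 := by
          rw [abs_neg]; linarith [hmvt]
  have nodeP : ∀ k, k ≤ m → |g ((k : ℝ) / M) - gm ((k : ℝ) / M)| ≤ k * B / M ^ 2 := by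
    intro k
    induction k with
    | zero => intro _; simp [gm0]
    | succ k ih =>
      intro hk1
      have hk : k < m := Nat.lt_of_succ_le hk1
      have hcast : ((k + 1 : ℕ) : ℝ) = (k : ℝ) + 1 := by push_cast; ring
      have hstep := stepP k hk (((k : ℝ) + 1) / M) (by gcongr; linarith) le_rfl
      have hih := ih (le_of_lt hk)
      rw [hcast]
      calc |g (((k : ℝ) + 1) / M) - gm (((k : ℝ) + 1) / M)|
          ≤ |g ((k : ℝ) / M) - gm ((k : ℝ) / M)| + B / M ^ 2 := hstep
        _ ≤ (k : ℝ) * B / M ^ 2 + B / M ^ 2 := by linarith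
        _ = ((k : ℝ) + 1) * B / M ^ 2 := by ring
  have nodeN : ∀ k, k ≤ m → |g (-((k : ℝ) / M)) - gm (-((k : ℝ) / M))| ≤ k * B / M ^ 2 := by
    intro k
    induction k with
    | zero => intro _; simp [gm0]
    | succ k ih =>
      intro hk1
      have hk : k < m := Nat.lt_of_succ_le hk1
      have hcast : ((k + 1 : ℕ) : ℝ) = (k : ℝ) + 1 := by push_cast; ring
      have hstep := stepN k hk (-(((k : ℝ) + 1) / M)) le_rfl (by simp only [neg_le_neg_iff]; gcongr; linarith)
      have hih := ih (le_of_lt hk)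
      rw [hcast]
      calc |g (-(((k : ℝ) + 1) / M)) - gm (-(((k : ℝ) + 1) / M))|
          ≤ |g (-((k : ℝ) / M)) - gm (-((k : ℝ) / M))| + B / M ^ 2 := hstep
        _ ≤ (k : ℝ) * B / M ^ 2 + B / M ^ 2 := by linarith
        _ = ((k : ℝ) + 1) * B / M ^ 2 := by ring
  have valP : ∀ z, 0 ≤ z → z ≤ 1 → |g z - gm z| ≤ B / M := by
    intro z h0 h1
    set k : ℕ := min (Nat.floor (M * z)) (m - 1) with hkdef
    have hkm : k < m := lt_of_le_of_lt (min_le_right _ _) (Nat.sub_lt hm one_pos)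
    have hMz0 : 0 ≤ M * z := by positivity
    have hlow : (k : ℝ) / M ≤ z := by
      rw [div_le_iff₀ hM]
      have h2 : (k : ℝ) ≤ (Nat.floor (M * z) : ℝ) := by exact_mod_cast min_le_left _ _
      have h3 : ((Nat.floor (M * z)) : ℝ) ≤ M * z := Nat.floor_le hMz0
      linarith [mul_comm z M]
    have hhigh : z ≤ ((k : ℝ) + 1) / M := by
      rw [le_div_iff₀ hM]
      rcases le_or_gt (Nat.floor (M * z)) (m - 1) with h | h
      · have hkeq : k = Nat.floor (M * z) := min_eq_left h
        have h4 := Nat.lt_floor_add_one (M * z)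
        rw [hkeq]
        nlinarith [h4]
      · have hkeq : k = m - 1 := min_eq_right (le_of_lt h)
        have h5 : ((m - 1 : ℕ) : ℝ) + 1 = M := by
          rw [hMdef]
          have h6 : ((m - 1 : ℕ) : ℝ) = (m : ℝ) - 1 := by
            have := Nat.one_le_iff_ne_zero.mpr (Nat.pos_iff_ne_zero.mp hm)
            push_cast [this]
            ring
          rw [h6]; ring
        rw [hkeq, h5]
        nlinarith
    have hstep := stepP k hkm z hlow hhigh
    have hnd := nodeP k (le_of_lt hkm)
    have hk1 : (k : ℝ) + 1 ≤ M := by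
      rw [hMdef]; exact_mod_cast Nat.succ_le_of_lt hkm
    have hB2 : 0 ≤ B / M ^ 2 := by positivity
    have heq : M * (B / M ^ 2) = B / M := by field_simp
    calc |g z - gm z| ≤ (k : ℝ) * B / M ^ 2 + B / M ^ 2 := by linarith
      _ = ((k : ℝ) + 1) * (B / M ^ 2) := by ring
      _ ≤ M * (B / M ^ 2) := by nlinarith
      _ = B / M := heq
  have valN : ∀ z, -1 ≤ z → z ≤ 0 → |g z - gm z| ≤ B / M := by
    intro z h0 h1
    set k : ℕ := min (Nat.floor (M * (-z))) (m - 1) with hkdef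
    have hkm : k < m := lt_of_le_of_lt (min_le_right _ _) (Nat.sub_lt hm one_pos)
    have hMz0 : 0 ≤ M * (-z) := by
      have : 0 ≤ -z := by linarith
      positivity
    have hlow : (k : ℝ) / M ≤ -z := by
      rw [div_le_iff₀ hM]
      have h2 : (k : ℝ) ≤ (Nat.floor (M * (-z)) : ℝ) := by exact_mod_cast min_le_left _ _
      have h3 : ((Nat.floor (M * (-z))) : ℝ) ≤ M * (-z) := Nat.floor_le hMz0
      linarith [mul_comm (-z) M]
    have hhigh : -z ≤ ((k : ℝ) + 1) / M := by
      rw [le_div_iff₀ hM]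
      rcases le_or_gt (Nat.floor (M * (-z))) (m - 1) with h | h
      · have hkeq : k = Nat.floor (M * (-z)) := min_eq_left h
        have h4 := Nat.lt_floor_add_one (M * (-z))
        rw [hkeq]
        nlinarith [h4]
      · have hkeq : k = m - 1 := min_eq_right (le_of_lt h)
        have h5 : ((m - 1 : ℕ) : ℝ) + 1 = M := by
          rw [hMdef]
          have h6 : ((m - 1 : ℕ) : ℝ) = (m : ℝ) - 1 := by
            have := Nat.one_le_iff_ne_zero.mpr (Nat.pos_iff_ne_zero.mp hm)
            push_cast [this]
            ring
          rw [h6]; ring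
        rw [hkeq, h5]
        nlinarith
    have hstep := stepN k hkm z (by linarith) (by linarith)
    have hnd := nodeN k (le_of_lt hkm)
    have hk1 : (k : ℝ) + 1 ≤ M := by
      rw [hMdef]; exact_mod_cast Nat.succ_le_of_lt hkm
    have hB2 : 0 ≤ B / M ^ 2 := by positivity
    have heq : M * (B / M ^ 2) = B / M := by field_simp
    calc |g z - gm z| ≤ (k : ℝ) * B / M ^ 2 + B / M ^ 2 := by linarith
      _ = ((k : ℝ) + 1) * (B / M ^ 2) := by ring
      _ ≤ M * (B / M ^ 2) := by nlinarith
      _ = B / M := heq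
  -- coefficient bounds
  have habP : ∀ i, i < m → |aP i| ≤ 2 * B := by
    intro i hi
    simp only [haPdef]
    rcases Nat.eq_zero_or_pos i with rfl | hi0
    · simp only [Nat.zero_sub, sub_self, mul_zero, abs_zero]
      linarith
    · have h1 : ((i : ℝ) / M) ∈ S := hnode i (le_of_lt hi)
      have h2 : ((((i - 1 : ℕ)) : ℝ) / M) ∈ S := hnode (i - 1) (by omega)
      have h := hlip ((i : ℝ) / M) h1 ((((i - 1 : ℕ)) : ℝ) / M) h2
      have hcast : (((i - 1 : ℕ)) : ℝ) = (i : ℝ) - 1 := by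
        have := Nat.one_le_iff_ne_zero.mpr (Nat.pos_iff_ne_zero.mp hi0)
        push_cast [this]; ring
      have habs : |(i : ℝ) / M - (((i - 1 : ℕ)) : ℝ) / M| = 1 / M := by
        rw [hcast, show (i : ℝ) / M - ((i : ℝ) - 1) / M = 1 / M from by ring,
          abs_of_nonneg (by positivity : (0:ℝ) ≤ 1 / M)]
      have hdd : |d i - d (i - 1)| ≤ B * (1 / M) := by
        have hdl : d i = g1 ((i : ℝ) / M) := by simp only [hddef]
        have hdr : d (i - 1) = g1 ((((i - 1 : ℕ)) : ℝ) / M) := by simp only [hddef]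
        rw [hdl, hdr]
        calc |g1 ((i : ℝ) / M) - g1 ((((i - 1 : ℕ)) : ℝ) / M)|
            ≤ B * |(i : ℝ) / M - (((i - 1 : ℕ)) : ℝ) / M| := h
          _ = B * (1 / M) := by rw [habs]
      calc |2 * M * (d i - d (i - 1))| = 2 * M * |d i - d (i - 1)| := by
            rw [abs_mul, abs_of_nonneg (by positivity : (0:ℝ) ≤ 2 * M)]
        _ ≤ 2 * M * (B * (1 / M)) := mul_le_mul_of_nonneg_left hdd (by positivity)
        _ = 2 * B := by field_simp
  have habN : ∀ i, i < m → |aN i| ≤ 2 * B := by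
    intro i hi
    simp only [haNdef]
    rcases Nat.eq_zero_or_pos i with rfl | hi0
    · simp only [Nat.zero_sub, sub_self, mul_zero, abs_zero]
      linarith
    · have h1 : (-((i : ℝ) / M)) ∈ S := hnodeN i (le_of_lt hi)
      have h2 : (-((((i - 1 : ℕ)) : ℝ) / M)) ∈ S := hnodeN (i - 1) (by omega)
      have h := hlip (-((i : ℝ) / M)) h1 (-((((i - 1 : ℕ)) : ℝ) / M)) h2
      have hcast : (((i - 1 : ℕ)) : ℝ) = (i : ℝ) - 1 := by
        have := Nat.one_le_iff_ne_zero.mpr (Nat.pos_iff_ne_zero.mp hi0)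
        push_cast [this]; ring
      have habs : |(-((i : ℝ) / M)) - (-((((i - 1 : ℕ)) : ℝ) / M))| = 1 / M := by
        rw [hcast]
        rw [show (-((i : ℝ) / M)) - (-(((i : ℝ) - 1) / M)) = -(1 / M) by ring, abs_neg,
          abs_of_nonneg (by positivity)]
      have hdd : |e i - e (i - 1)| ≤ B * (1 / M) := by
        have hdl : e i = -g1 (-((i : ℝ) / M)) := by simp only [hedef]
        have hdr : e (i - 1) = -g1 (-((((i - 1 : ℕ)) : ℝ) / M)) := by simp only [hedef]
        rw [hdl, hdr]
        rw [show -g1 (-((i : ℝ) / M)) - -g1 (-((((i - 1 : ℕ)) : ℝ) / M))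
            = -(g1 (-((i : ℝ) / M)) - g1 (-((((i - 1 : ℕ)) : ℝ) / M))) by ring, abs_neg]
        calc |g1 (-((i : ℝ) / M)) - g1 (-((((i - 1 : ℕ)) : ℝ) / M))|
            ≤ B * |(-((i : ℝ) / M)) - (-((((i - 1 : ℕ)) : ℝ) / M))| := h
          _ = B * (1 / M) := by rw [habs]
      calc |2 * M * (e i - e (i - 1))| = 2 * M * |e i - e (i - 1)| := by
            rw [abs_mul, abs_of_nonneg (by positivity : (0:ℝ) ≤ 2 * M)]
        _ ≤ 2 * M * (B * (1 / M)) := mul_le_mul_of_nonneg_left hdd (by positivity)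
        _ = 2 * B := by field_simp
  -- the network coefficients
  set Afn : ℕ → ℝ := fun n => if n < m then aP n else aN (n - m) with hAfn
  set Bfn : ℕ → ℝ := fun n => if n < m then -((n : ℝ) / M) else -((((n - m : ℕ)) : ℝ) / M) with hBfn
  set Efn : ℕ → ℝ := fun n => if n < m then (1 : ℝ) else -1 with hEfn
  have sumid : ∀ z : ℝ, (∑ k : Fin (2 * m), Afn (k : ℕ) * max (Efn (k : ℕ) * z + Bfn (k : ℕ)) 0)
      = NN z := by
    intro z
    rw [Fin.sum_univ_eq_sum_range (fun n => Afn n * max (Efn n * z + Bfn n) 0) (2 * m)]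
    rw [two_mul, Finset.sum_range_add]
    simp only [hNNdef]
    congr 1
    · apply Finset.sum_congr rfl
      intro i hi
      have him : i < m := Finset.mem_range.mp hi
      simp only [hAfn, hBfn, hEfn, if_pos him]
      congr 1
      congr 1
      ring
    · apply Finset.sum_congr rfl
      intro i hi
      have him : i < m := Finset.mem_range.mp hi
      have hnm : ¬ (m + i < m) := by omega
      have hsub : m + i - m = i := by omega
      simp only [hAfn, hBfn, hEfn, if_neg hnm, hsub]
      congr 1
      congr 1
      ring
  have hBMle : B / M ≤ 2 * B / M := by
    have h1 : 0 ≤ B / M := by positivity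
    have h2 : 2 * B / M = B / M + B / M := by ring
    linarith
  -- a.e. derivative bound
  have hae : ∀ᵐ z ∂(volume.restrict S), |g1 z - derivWithin gm S z| ≤ 2 * B / M := by
    have hcnt : (Set.range (fun j : ℤ => (j : ℝ) / M)).Countable := Set.countable_range _
    have h0 : ∀ᵐ z ∂(volume.restrict S), z ∉ Set.range (fun j : ℤ => (j : ℝ) / M) :=
      measure_eq_zero_iff_ae_notMem.mp (hcnt.measure_zero _)
    have hSmeas : MeasurableSet S := measurableSet_Icc
    filter_upwards [ae_restrict_mem hSmeas, h0] with z hzS hzR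
    have hne : ∀ j : ℤ, z ≠ (j : ℝ) / M := fun j hj => hzR ⟨j, hj.symm⟩
    have hmM : ((m : ℤ) : ℝ) = M := by rw [hMdef]; push_cast; ring
    have hz1 : -1 < z := by
      rcases lt_or_eq_of_le hzS.1 with h | h
      · exact h
      · exact absurd (by rw [← h]; push_cast [hmM]; field_simp : z = ((-(m : ℤ) : ℤ) : ℝ) / M)
          (hne (-(m : ℤ)))
    have hz2 : z < 1 := by
      rcases lt_or_eq_of_le hzS.2 with h | h
      · exact h
      · exact absurd (by rw [h]; push_cast [hmM]; field_simp : z = (((m : ℤ) : ℤ) : ℝ) / M)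
          (hne ((m : ℤ)))
    -- local slope implies derivative
    have hderiv : ∀ lo hi σ, lo < z → z < hi →
        (∀ x y, lo ≤ x → x ≤ hi → lo ≤ y → y ≤ hi → gm x - gm y = σ * (x - y)) →
        derivWithin gm S z = σ := by
      intro lo hi σ hlo hhi hslope
      have hnh : S ∈ nhds z := Icc_mem_nhds (by linarith) (by linarith)
      rw [derivWithin_of_mem_nhds hnh]
      have hev : gm =ᶠ[nhds z] (fun t => gm z + σ * (t - z)) := by
        filter_upwards [Ioo_mem_nhds hlo hhi] with t ht
        have := hslope t z (le_of_lt ht.1) (le_of_lt ht.2) (le_of_lt hlo) (le_of_lt hhi)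
        linarith
      rw [hev.deriv_eq]
      have hda : HasDerivAt (fun t => gm z + σ * (t - z)) σ z := by
        have h1 : HasDerivAt (fun t : ℝ => t - z) 1 z := (hasDerivAt_id z).sub_const z
        have h2 : HasDerivAt (fun t : ℝ => σ * (t - z)) (σ * 1) z := h1.const_mul σ
        simpa using h2.const_add (gm z)
      exact hda.deriv
    set j : ℤ := ⌊M * z⌋ with hjdef
    have hj1 : (j : ℝ) < M * z := by
      rcases lt_or_eq_of_le (Int.floor_le (M * z)) with h | h
      · exact h
      · exact absurd (by rw [eq_div_iff hM.ne']; linarith [h, mul_comm M z] : z = (j : ℝ) / M) (hne j)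
    have hj2 : M * z < (j : ℝ) + 1 := Int.lt_floor_add_one _
    have hjlo : -(m : ℤ) ≤ j := by
      rw [hjdef]
      apply Int.le_floor.mpr
      push_cast [hmM]
      nlinarith
    have hjhi : j < (m : ℤ) := by
      rw [hjdef]
      apply Int.floor_lt.mpr
      push_cast [hmM]
      nlinarith
    rcases le_or_gt 0 j with hj0 | hj0
    · -- positive side
      set k : ℕ := j.toNat with hkd
      have hkj : ((k : ℕ) : ℝ) = (j : ℝ) := by
        rw [hkd]
        exact_mod_cast congrArg (fun n : ℤ => (n : ℝ)) (Int.toNat_of_nonneg hj0)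
      have hkm : k < m := by omega
      have hzlo : (k : ℝ) / M < z := by
        rw [hkj, div_lt_iff₀ hM]
        linarith [mul_comm z M]
      have hzhi : z < ((k : ℝ) + 1) / M := by
        rw [hkj, lt_div_iff₀ hM]
        linarith [mul_comm z M]
      have hdeq := hderiv ((k : ℝ) / M) (((k : ℝ) + 1) / M) (d k) hzlo hzhi
        (fun x y hx1 hx2 hy1 hy2 => slopeP k hkm x y hx1 hx2 hy1 hy2)
      rw [hdeq]
      have hkS := hnode k (le_of_lt hkm)
      have h := hlip z hzS ((k : ℝ) / M) hkS
      have hdl : d k = g1 ((k : ℝ) / M) := by simp only [hddef]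
      rw [hdl]
      have habs : |z - (k : ℝ) / M| ≤ 1 / M := by
        rw [abs_of_nonneg (by linarith)]
        have hq : ((k : ℝ) + 1) / M - (k : ℝ) / M = 1 / M := by ring
        linarith
      calc |g1 z - g1 ((k : ℝ) / M)| ≤ B * |z - (k : ℝ) / M| := h
        _ ≤ B * (1 / M) := mul_le_mul_of_nonneg_left habs hB0
        _ = B / M := by ring
        _ ≤ 2 * B / M := hBMle
    · -- negative side
      set k : ℕ := (-j - 1).toNat with hkd
      have hkj : ((k : ℕ) : ℝ) = -(j : ℝ) - 1 := by
        have h1 : ((-j - 1 : ℤ) : ℝ) = -(j : ℝ) - 1 := by push_cast; ring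
        rw [hkd, ← h1]
        exact_mod_cast congrArg (fun n : ℤ => (n : ℝ)) (Int.toNat_of_nonneg (by omega))
      have hkm : k < m := by omega
      have hzlo : -(((k : ℝ) + 1) / M) < z := by
        rw [hkj, show -((-(j : ℝ) - 1 + 1) / M) = (j : ℝ) / M by ring, div_lt_iff₀ hM]
        linarith [mul_comm z M]
      have hzhi : z < -((k : ℝ) / M) := by
        rw [hkj, show -((-(j : ℝ) - 1) / M) = ((j : ℝ) + 1) / M by ring, lt_div_iff₀ hM]
        linarith [mul_comm z M]
      have hdeq := hderiv (-(((k : ℝ) + 1) / M)) (-((k : ℝ) / M)) (g1 (-((k : ℝ) / M))) hzlo hzhi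
        (fun x y hx1 hx2 hy1 hy2 => slopeN k hkm x y hx1 hx2 hy1 hy2)
      rw [hdeq]
      have hkS := hnodeN k (le_of_lt hkm)
      have h := hlip z hzS (-((k : ℝ) / M)) hkS
      have habs : |z - (-((k : ℝ) / M))| ≤ 1 / M := by
        rw [abs_of_nonpos (by linarith)]
        have hq : -((k : ℝ) / M) - (-(((k : ℝ) + 1) / M)) = 1 / M := by ring
        linarith
      calc |g1 z - g1 (-((k : ℝ) / M))| ≤ B * |z - (-((k : ℝ) / M))| := h
        _ ≤ B * (1 / M) := mul_le_mul_of_nonneg_left habs hB0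
        _ = B / M := by ring
        _ ≤ 2 * B / M := hBMle
  refine ⟨fun k => Afn (k : ℕ), fun k => Bfn (k : ℕ), fun k => Efn (k : ℕ), ?_, ?_, ?_, ?_, ?_⟩
  · intro k
    simp only [hAfn]
    by_cases h : (k : ℕ) < m
    · rw [if_pos h]
      exact le_trans (habP _ h) (by linarith)
    · rw [if_neg h]
      have hlt : (k : ℕ) - m < m := by omega
      exact le_trans (habN _ hlt) (by linarith)
  · intro k
    simp only [hEfn]
    by_cases h : (k : ℕ) < m
    · left; rw [if_pos h]
    · right; rw [if_neg h]
  · intro k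
    simp only [hBfn]
    by_cases h : (k : ℕ) < m
    · rw [if_pos h, abs_neg, abs_of_nonneg (by positivity)]
      rw [div_le_one hM, hMdef]
      exact_mod_cast le_of_lt h
    · rw [if_neg h, abs_neg, abs_of_nonneg (by positivity)]
      rw [div_le_one hM, hMdef]
      have : (k : ℕ) - m < m := by omega
      exact_mod_cast le_of_lt this
  · intro z hz
    rw [sumid z]
    have hshow : g 0 + 1 / (2 * M) * NN z = gm z := by rw [hgmdef]
    rw [hshow]
    rcases le_total z 0 with h | h
    · exact le_trans (valN z hz.1 h) hBMle
    · exact le_trans (valP z h hz.2) hBMle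
  · have hfun : (fun z => g 0 + 1 / (2 * M) * ∑ k : Fin (2 * m),
        Afn (k : ℕ) * max (Efn (k : ℕ) * z + Bfn (k : ℕ)) 0) = gm := by
      funext z
      rw [sumid z, hgmdef]
    rw [hfun]
    exact hae
end
end

section
/- Let C > 0, θ ≥ 0, b ∈ ℝ and |γ| ≤ C, and define on [−1,1] the functions g(z) = (γ/(1+θ)²)·(cos(θz + b) − cos(b)) and g̃(z) = g(z) + (γ·sin(b)·θ/(1+θ)²)·z. Then g̃(0) = g̃'(0) = 0 and ‖g̃^{(s)}‖_{L^∞([−1,1])} ≤ 2C for s = 0,1,2, and for every m ∈ ℕ⁺ there exist coefficients a_k with |a_k| ≤ 8C, signs ε_k ∈ {−1,1} and biases b_k with |b_k| ≤ 1 (k = 1,…,2m) such that ‖g̃ − (1/(2m)) Σ_{k=1}^{2m} a_k·ReLU(ε_k z + b_k)‖_{W^{1,∞}([−1,1])} ≤ 4C/m. -/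
open MeasureTheory

noncomputable section


namespace Stmt15Aux

/-- sin is 1-Lipschitz -/
lemma sin_lip (a c : ℝ) : |Real.sin a - Real.sin c| ≤ |a - c| := by
  rw [Real.sin_sub_sin]
  have h1 := Real.abs_sin_le_abs (x := (a-c)/2)
  have h2 := Real.abs_cos_le_one ((a+c)/2)
  have h4 : |a - c| = 2 * |(a-c)/2| := by rw [abs_div, abs_two]; ring
  calc |2 * Real.sin ((a - c)/2) * Real.cos ((a + c)/2)|
      = 2 * |Real.sin ((a-c)/2)| * |Real.cos ((a+c)/2)| := by
        rw [abs_mul, abs_mul]; norm_num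
    _ ≤ |a - c| := by rw [h4]; nlinarith [abs_nonneg (Real.sin ((a-c)/2)), abs_nonneg ((a-c)/2)]

/-- the piecewise-linear approximant built from slopes of `u'` -/
def P (m : ℕ) (u' : ℝ → ℝ) (z : ℝ) : ℝ :=
  ∑ j ∈ Finset.range m,
    (u' ((↑(j+1))/(m:ℝ)) - u' ((j : ℝ)/(m:ℝ))) * max (z - (j : ℝ)/(m:ℝ)) 0

lemma P_nonpos {m : ℕ} {u' : ℝ → ℝ} {z : ℝ} (hz : z ≤ 0) : P m u' z = 0 := by
  refine Finset.sum_eq_zero fun j hj => ?_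
  have h1 : (0:ℝ) ≤ (j:ℝ)/m := by positivity
  have : z - (j:ℝ)/m ≤ 0 := by linarith
  rw [max_eq_right this, mul_zero]

lemma P_cell {m : ℕ} (hm : 0 < m) {u' : ℝ → ℝ} (hu'0 : u' 0 = 0) (i : ℕ) (him : i < m)
    (z : ℝ) (hz1 : (i:ℝ)/m ≤ z) (hz2 : z ≤ (↑(i+1))/m) :
    P m u' z = P m u' ((i:ℝ)/m) + (z - (i:ℝ)/m) * u' ((↑(i+1))/(m:ℝ)) := by
  have hmR : (0:ℝ) < m := by exact_mod_cast hm
  have hsub : Finset.range (i+1) ⊆ Finset.range m := Finset.range_subset_range.mpr him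
  have key : P m u' z - P m u' ((i:ℝ)/m)
      = ∑ j ∈ Finset.range (i+1),
          (u' ((↑(j+1))/(m:ℝ)) - u' ((j : ℝ)/(m:ℝ))) * (z - (i:ℝ)/m) := by
    unfold P
    rw [← Finset.sum_sub_distrib]
    rw [← Finset.sum_subset hsub ?h0]
    case h0 =>
      intro j hj hj2
      have hij : (i:ℝ) + 1 ≤ (j:ℝ) := by
        have : i + 1 ≤ j := by
          simp only [Finset.mem_range, not_lt] at hj2; exact hj2
        exact_mod_cast this
      have h1 : z - (j:ℝ)/m ≤ 0 := by
        have : ((i:ℝ)+1)/m ≤ (j:ℝ)/m := by gcongr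
        have h2 : z ≤ ((i:ℝ)+1)/m := by push_cast at hz2; exact hz2
        linarith
      have h2 : (i:ℝ)/m - (j:ℝ)/m ≤ 0 := by
        have hij' : (i:ℝ) ≤ (j:ℝ) := by linarith
        have := (div_le_div_iff_of_pos_right hmR).mpr hij'
        linarith
      rw [max_eq_right h1, max_eq_right h2]
      ring
    refine Finset.sum_congr rfl fun j hj => ?_
    have hji : (j:ℝ) ≤ (i:ℝ) := by
      have : j ≤ i := Nat.lt_succ_iff.mp (Finset.mem_range.mp hj)
      exact_mod_cast this
    have h1 : 0 ≤ z - (j:ℝ)/m := by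
      have : (j:ℝ)/m ≤ (i:ℝ)/m := by gcongr
      linarith
    have h2 : 0 ≤ (i:ℝ)/m - (j:ℝ)/m := by
      have : (j:ℝ)/m ≤ (i:ℝ)/m := by gcongr
      linarith
    rw [max_eq_left h1, max_eq_left h2]
    ring
  have tel : ∑ j ∈ Finset.range (i+1),
      (u' ((↑(j+1))/(m:ℝ)) - u' ((j : ℝ)/(m:ℝ))) = u' ((↑(i+1))/(m:ℝ)) := by
    have := Finset.sum_range_sub (f := fun n : ℕ => u' ((n:ℝ)/m)) (i+1)
    simpa [hu'0] using this
  rw [← Finset.sum_mul] at key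
  rw [tel] at key
  linarith

lemma P_approx {m : ℕ} (hm : 0 < m) {u u' : ℝ → ℝ} (hu : ∀ x, HasDerivAt u (u' x) x)
    (hu0 : u 0 = 0) (hu'0 : u' 0 = 0) {L : ℝ} (hL : 0 ≤ L)
    (hlip : ∀ x y, |u' x - u' y| ≤ L * |x - y|) :
    ∀ i, i ≤ m → ∀ z, 0 ≤ z → z ≤ (i:ℝ)/m → |u z - P m u' z| ≤ L * z / m := by
  have hmR : (0:ℝ) < m := by exact_mod_cast hm
  intro i
  induction i with
  | zero =>
    intro _ z h0 h1
    have hz : z = 0 := le_antisymm (by simpa using h1) h0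
    subst hz
    simp [hu0, P_nonpos le_rfl]
  | succ i ih =>
    intro him z h0 h1
    have him' : i < m := Nat.lt_of_succ_le him
    by_cases hc : z ≤ (i:ℝ)/m
    · exact ih (Nat.le_of_succ_le him) z h0 hc
    · have hz1 : (i:ℝ)/m ≤ z := (not_le.mp hc).le
      have hcell := P_cell hm hu'0 i him' z hz1 h1
      have hIH := ih (Nat.le_of_succ_le him) ((i:ℝ)/m) (by positivity) le_rfl
      set s := u' ((↑(i+1))/(m:ℝ)) with hs
      -- mean value inequality on [i/m, z]
      have hmvt : ‖(u z - s*z) - (u ((i:ℝ)/m) - s*((i:ℝ)/m))‖ ≤ (L/m) * ‖z - (i:ℝ)/m‖ := by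
        refine Convex.norm_image_sub_le_of_norm_hasDerivWithin_le
          (f := fun w => u w - s*w) (f' := fun w => u' w - s)
          (fun w hw => ((hu w).sub (((hasDerivAt_id w).const_mul s).congr_deriv (mul_one s))).hasDerivWithinAt)
          (fun w hw => ?_) (convex_Icc _ _) (Set.left_mem_Icc.mpr hz1) (Set.right_mem_Icc.mpr hz1)
        rw [Real.norm_eq_abs]
        have h1' : |u' w - s| ≤ L * |w - (↑(i+1))/(m:ℝ)| := hlip _ _
        have hw1 : (i:ℝ)/m ≤ w := hw.1
        have hw2 : w ≤ (↑(i+1))/(m:ℝ) := le_trans hw.2 h1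
        have habs : |w - (↑(i+1))/(m:ℝ)| ≤ 1/m := by
          rw [abs_sub_comm, abs_of_nonneg (by linarith)]
          have key : ((i:ℝ)+1)/m - (i:ℝ)/m = 1/m := by field_simp; ring
          push_cast
          linarith
        calc |u' w - s| ≤ L * |w - (↑(i+1))/(m:ℝ)| := h1'
          _ ≤ L * (1/m) := by gcongr
          _ = L/m := by ring
      rw [Real.norm_eq_abs, Real.norm_eq_abs, abs_of_nonneg (by linarith : (0:ℝ) ≤ z - (i:ℝ)/m)] at hmvt
      have heq : u z - P m u' z
          = (u ((i:ℝ)/m) - P m u' ((i:ℝ)/m)) + ((u z - s*z) - (u ((i:ℝ)/m) - s*((i:ℝ)/m))) := by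
        rw [hcell]; ring
      calc |u z - P m u' z| ≤ |u ((i:ℝ)/m) - P m u' ((i:ℝ)/m)|
            + |(u z - s*z) - (u ((i:ℝ)/m) - s*((i:ℝ)/m))| := by rw [heq]; exact abs_add_le _ _
        _ ≤ L * ((i:ℝ)/m) / m + (L/m) * (z - (i:ℝ)/m) := add_le_add hIH hmvt
        _ = L * z / m := by field_simp; ring

lemma deriv_affine (A B s : ℝ) (z : ℝ) : deriv (fun w => A + (w - B) * s) z = s := by
  have h : HasDerivAt (fun w => A + (w - B) * s) (1 * s) z :=
    ((((hasDerivAt_id z).sub_const B).mul_const s)).const_add A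
  rw [h.deriv, one_mul]

lemma deriv_affine_neg (A B s : ℝ) (z : ℝ) : deriv (fun w => A + (-w - B) * s) z = -s := by
  have h : HasDerivAt (fun w => A + (-w - B) * s) (-1 * s) z :=
    ((((hasDerivAt_neg z).sub_const B).mul_const s)).const_add A
  rw [h.deriv]; ring


end Stmt15Aux

open Stmt15Aux

set_option maxHeartbeats 1000000 in
theorem stmt15 (C : ℝ) (hC : 0 < C) (θ : ℝ) (hθ : 0 ≤ θ) (b γ : ℝ) (hγ : |γ| ≤ C)
    -- `g(z) = (γ/(1+θ)²)(cos(θz + b) - cos b)` and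
    -- `g̃(z) = g(z) + (γ sin(b) θ/(1+θ)²) z`
    (g gt : ℝ → ℝ)
    (hgdef : ∀ z, g z = (γ / (1 + θ) ^ 2) * (Real.cos (θ * z + b) - Real.cos b))
    (hgtdef : ∀ z, gt z = g z + (γ * Real.sin b * θ / (1 + θ) ^ 2) * z) :
    -- `g̃(0) = g̃'(0) = 0`, `‖g̃⁽ˢ⁾‖_∞ ≤ 2C` on `[-1,1]` for `s = 0,1,2` …
    gt 0 = 0 ∧ deriv gt 0 = 0 ∧
    (∀ s ∈ Finset.range 3, ∀ z ∈ Set.Icc (-1 : ℝ) 1, |iteratedDeriv s gt z| ≤ 2 * C) ∧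
    -- … and for every `m` there is a two-layer ReLU combination within `4C/m` of `g̃`
    -- in `W^{1,∞}([-1,1])`
    (∀ m : ℕ, 0 < m →
      ∃ a bb εk : Fin (2 * m) → ℝ,
        (∀ k, |a k| ≤ 8 * C) ∧ (∀ k, εk k = 1 ∨ εk k = -1) ∧ (∀ k, |bb k| ≤ 1) ∧
        (∀ z ∈ Set.Icc (-1 : ℝ) 1,
          |gt z - (1 / (2 * (m : ℝ))) * ∑ k, a k * max (εk k * z + bb k) 0| ≤ 4 * C / m) ∧
        (∀ᵐ z ∂(volume.restrict (Set.Icc (-1 : ℝ) 1)),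
          |deriv gt z -
              deriv (fun z => (1 / (2 * (m : ℝ))) * ∑ k, a k * max (εk k * z + bb k) 0) z| ≤
            4 * C / m)) := by
  obtain ⟨K, hKdef⟩ : ∃ K : ℝ, K = γ / (1 + θ) ^ 2 := ⟨_, rfl⟩
  have hqpos : (0:ℝ) < (1 + θ) ^ 2 := by nlinarith
  have hq1 : (1:ℝ) ≤ (1 + θ) ^ 2 := by nlinarith
  have hKabs : |K| = |γ| / (1 + θ) ^ 2 := by
    rw [hKdef, abs_div, abs_of_pos hqpos]
  have hγ0 : 0 ≤ |γ| := abs_nonneg γ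
  have hK : |K| ≤ C := by
    rw [hKabs, div_le_iff₀ hqpos]; nlinarith
  have hKθ : |K| * θ ≤ C := by
    rw [hKabs, div_mul_eq_mul_div, div_le_iff₀ hqpos]
    nlinarith [mul_nonneg (sub_nonneg.mpr hγ) hθ, hC.le, mul_nonneg hC.le hθ,
      mul_nonneg hC.le (mul_nonneg hθ hθ)]
  have hKθ2 : |K| * θ ^ 2 ≤ C := by
    rw [hKabs, div_mul_eq_mul_div, div_le_iff₀ hqpos]
    nlinarith [mul_nonneg (sub_nonneg.mpr hγ) (mul_nonneg hθ hθ), hC.le,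
      mul_nonneg hC.le hθ, mul_nonneg hC.le (mul_nonneg hθ hθ)]
  have hgt : ∀ z, gt z = K * (Real.cos (θ*z+b) - Real.cos b) + (K * Real.sin b * θ) * z := by
    intro z; rw [hgtdef, hgdef, hKdef]; ring
  obtain ⟨u', hu'⟩ : ∃ f : ℝ → ℝ, f = fun x => K * θ * (Real.sin b - Real.sin (θ*x+b)) :=
    ⟨_, rfl⟩
  -- derivative of gt
  have hd : ∀ x, HasDerivAt gt (u' x) x := by
    intro x
    have h1 : HasDerivAt (fun z : ℝ => θ*z + b) θ x := by
      simpa using ((hasDerivAt_id x).const_mul θ).add_const b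
    have h2 := (Real.hasDerivAt_cos (θ*x+b)).comp x h1
    simp only [Function.comp_def] at h2
    have h3 := ((h2.sub_const (Real.cos b)).const_mul K).add
        ((hasDerivAt_id x).const_mul (K * Real.sin b * θ))
    have hfun : gt = fun z => K * (Real.cos (θ*z+b) - Real.cos b) + (K * Real.sin b * θ) * z :=
      funext hgt
    rw [hfun, hu']
    refine h3.congr_deriv ?_
    ring
  -- second derivative
  have hd2 : ∀ x, HasDerivAt u' (-(K * θ^2 * Real.cos (θ*x+b))) x := by
    intro x
    have h1 : HasDerivAt (fun z : ℝ => θ*z + b) θ x := by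
      simpa using ((hasDerivAt_id x).const_mul θ).add_const b
    have h2 := (Real.hasDerivAt_sin (θ*x+b)).comp x h1
    simp only [Function.comp_def] at h2
    have h3 := (h2.const_sub (Real.sin b)).const_mul (K * θ)
    rw [hu']
    refine h3.congr_deriv ?_
    ring
  have hu'0 : u' 0 = 0 := by rw [hu']; simp
  have hgt0 : gt 0 = 0 := by
    have h : θ*0+b = b := by ring
    rw [hgt 0, h]; ring
  have hG'bound : ∀ x, |u' x| ≤ 2*C := by
    intro x
    rw [hu']
    have s1 := Real.neg_one_le_sin b; have s2 := Real.sin_le_one b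
    have s3 := Real.neg_one_le_sin (θ*x+b); have s4 := Real.sin_le_one (θ*x+b)
    have h1 : |Real.sin b - Real.sin (θ*x+b)| ≤ 2 := by
      rw [abs_le]; constructor <;> linarith
    calc |K * θ * (Real.sin b - Real.sin (θ*x+b))|
        = |K| * θ * |Real.sin b - Real.sin (θ*x+b)| := by
          rw [abs_mul, abs_mul, abs_of_nonneg hθ]
      _ ≤ 2*C := by nlinarith [abs_nonneg K, mul_nonneg (abs_nonneg K) hθ]
  have hlip : ∀ x y, |u' x - u' y| ≤ 2*C*|x-y| := by
    intro x y
    rw [hu']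
    have e1 : K*θ*(Real.sin b - Real.sin (θ*x+b)) - K*θ*(Real.sin b - Real.sin (θ*y+b))
        = K*θ*(Real.sin (θ*y+b) - Real.sin (θ*x+b)) := by ring
    rw [e1, abs_mul, abs_mul, abs_of_nonneg hθ]
    have h2 := sin_lip (θ*y+b) (θ*x+b)
    rw [show θ*y+b - (θ*x+b) = θ*(y-x) by ring, abs_mul, abs_of_nonneg hθ,
      abs_sub_comm y x] at h2
    have h3 : |Real.sin (θ*y+b) - Real.sin (θ*x+b)| ≤ θ * |x - y| := h2
    have h4 := mul_le_mul_of_nonneg_left h3 (mul_nonneg (abs_nonneg K) hθ)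
    have h5 : |K| * θ * (θ * |x-y|) = (|K| * θ^2) * |x-y| := by ring
    rw [h5] at h4
    have h6 := mul_le_mul_of_nonneg_right hKθ2 (abs_nonneg (x-y))
    nlinarith [abs_nonneg (x-y), mul_nonneg hC.le (abs_nonneg (x-y))]
  have hderiv_gt : deriv gt = u' := funext fun x => (hd x).deriv
  have hd0 : deriv gt 0 = 0 := by rw [hderiv_gt, hu'0]
  refine ⟨hgt0, hd0, ?_, ?_⟩
  · -- iterated derivative bounds
    intro s hs z hz
    have hz1 : |z| ≤ 1 := abs_le.mpr ⟨hz.1, hz.2⟩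
    have hs3 : s < 3 := Finset.mem_range.mp hs
    interval_cases s
    · rw [iteratedDeriv_zero, hgt z]
      have c1 := Real.neg_one_le_cos (θ*z+b); have c2 := Real.cos_le_one (θ*z+b)
      have c3 := Real.neg_one_le_cos b; have c4 := Real.cos_le_one b
      have s1 := Real.neg_one_le_sin b; have s2 := Real.sin_le_one b
      have h1 : |Real.cos (θ*z+b) - Real.cos b| ≤ 2 := by
        rw [abs_le]; constructor <;> linarith
      have hKsθ : |K * Real.sin b * θ| ≤ |K| * θ := by
        rw [abs_mul, abs_mul, abs_of_nonneg hθ]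
        have hsb : |Real.sin b| ≤ 1 := by rw [abs_le]; constructor <;> linarith
        nlinarith [abs_nonneg K, mul_nonneg (mul_nonneg (abs_nonneg K) (sub_nonneg.mpr hsb)) hθ]
      calc |K * (Real.cos (θ*z+b) - Real.cos b) + K * Real.sin b * θ * z|
          ≤ |K * (Real.cos (θ*z+b) - Real.cos b)| + |K * Real.sin b * θ * z| := abs_add_le _ _
        _ ≤ |K| * 2 + (|K| * θ) * 1 := by
            rw [abs_mul, abs_mul]
            exact add_le_add (mul_le_mul_of_nonneg_left h1 (abs_nonneg K))
              (mul_le_mul hKsθ hz1 (abs_nonneg z) (by positivity))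
        _ ≤ 2*C := by
            have : |K| * (2 + θ) ≤ 2*C := by
              rw [hKabs, div_mul_eq_mul_div, div_le_iff₀ hqpos]
              nlinarith [mul_nonneg (sub_nonneg.mpr hγ) hθ,
                mul_nonneg (sub_nonneg.mpr hγ) (mul_nonneg hθ hθ)]
            nlinarith
    · rw [iteratedDeriv_one, hderiv_gt]
      exact hG'bound z
    · have hit : iteratedDeriv 2 gt = deriv u' := by
        have h21 : (2:ℕ) = 1 + 1 := rfl
        rw [h21, iteratedDeriv_succ, iteratedDeriv_one, hderiv_gt]
      rw [hit, (hd2 z).deriv]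
      have c2 := Real.neg_one_le_cos (θ*z+b); have c3 := Real.cos_le_one (θ*z+b)
      have h1 : |Real.cos (θ*z+b)| ≤ 1 := by rw [abs_le]; constructor <;> linarith
      rw [abs_neg, abs_mul]
      have h2 : |K * θ^2| = |K| * θ^2 := by
        rw [abs_mul, abs_of_nonneg (by positivity : (0:ℝ) ≤ θ^2)]
      rw [h2]
      calc |K| * θ^2 * |Real.cos (θ*z+b)| ≤ |K| * θ^2 * 1 :=
            mul_le_mul_of_nonneg_left h1 (by positivity)
        _ ≤ 2*C := by linarith
  · -- the approximation part
    intro m hm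
    have hmR : (0:ℝ) < m := by exact_mod_cast hm
    obtain ⟨v', hv'⟩ : ∃ f : ℝ → ℝ, f = fun x => -u' (-x) := ⟨_, rfl⟩
    have hv'0 : v' 0 = 0 := by rw [hv']; simp [hu'0]
    have hud : ∀ x, HasDerivAt (fun v => gt (-v)) (v' x) x := by
      intro x
      have := (hd (-x)).comp x (hasDerivAt_neg x)
      rw [hv']
      simpa [Function.comp_def, mul_comm] using this
    have hgtn0 : (fun v => gt (-v)) 0 = 0 := by simp [hgt0]
    have hlipv : ∀ x y, |v' x - v' y| ≤ 2*C*|x-y| := by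
      intro x y
      rw [hv']
      have e : -u' (-x) - -u' (-y) = -(u' (-x) - u' (-y)) := by ring
      rw [e, abs_neg]
      have := hlip (-x) (-y)
      have e2 : |(-x) - (-y)| = |x - y| := by rw [show (-x) - (-y) = -(x-y) by ring, abs_neg]
      rwa [e2] at this
    have hL : (0:ℝ) ≤ 2*C := by linarith
    -- the coefficients
    obtain ⟨A, hA⟩ : ∃ f : ℕ → ℝ, f = fun k =>
        if k < m then 2*(m:ℝ)*(u' ((↑(k+1))/(m:ℝ)) - u' ((k:ℝ)/(m:ℝ)))
        else 2*(m:ℝ)*(v' ((↑(k-m+1))/(m:ℝ)) - v' ((↑(k-m):ℝ)/(m:ℝ))) := ⟨_, rfl⟩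
    obtain ⟨E, hE⟩ : ∃ f : ℕ → ℝ, f = fun k => if k < m then (1:ℝ) else -1 := ⟨_, rfl⟩
    obtain ⟨B, hB⟩ : ∃ f : ℕ → ℝ, f = fun k =>
        if k < m then -((k:ℝ)/(m:ℝ)) else -((↑(k-m):ℝ)/(m:ℝ)) := ⟨_, rfl⟩
    have hone : ((m:ℝ))/(m:ℝ) = 1 := div_self hmR.ne'
    have hstep : ∀ j : ℕ, (↑(j+1):ℝ)/(m:ℝ) - (j:ℝ)/(m:ℝ) = 1/m := by
      intro j; push_cast; field_simp; ring
    -- the key sum identity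
    have hsum : ∀ z : ℝ, (1 / (2 * (m:ℝ))) *
          ∑ k : Fin (2*m), A k.val * max (E k.val * z + B k.val) 0
        = P m u' z + P m v' (-z) := by
      intro z
      rw [Fin.sum_univ_eq_sum_range (fun k => A k * max (E k * z + B k) 0) (2*m)]
      rw [two_mul m, Finset.sum_range_add]
      have e1 : ∀ j ∈ Finset.range m, A j * max (E j * z + B j) 0
          = 2*(m:ℝ) * ((u' ((↑(j+1))/(m:ℝ)) - u' ((j:ℝ)/(m:ℝ))) * max (z - (j:ℝ)/(m:ℝ)) 0) := by
        intro j hj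
        have hjm : j < m := Finset.mem_range.mp hj
        simp only [hA, hE, hB]
        rw [if_pos hjm, if_pos hjm, if_pos hjm, one_mul, ← sub_eq_add_neg]
        ring
      rw [Finset.sum_congr rfl e1]
      have e2 : ∀ j ∈ Finset.range m, A (m+j) * max (E (m+j) * z + B (m+j)) 0
          = 2*(m:ℝ) * ((v' ((↑(j+1))/(m:ℝ)) - v' ((j:ℝ)/(m:ℝ))) * max (-z - (j:ℝ)/(m:ℝ)) 0) := by
        intro j hj
        have hjm : ¬ (m + j < m) := by omega
        have hms : m + j - m = j := by omega
        simp only [hA, hE, hB]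
        rw [if_neg hjm, if_neg hjm, if_neg hjm, hms, neg_one_mul, ← sub_eq_add_neg]
        ring
      rw [Finset.sum_congr rfl e2]
      rw [← Finset.mul_sum, ← Finset.mul_sum]
      have hP1 : P m u' z
          = ∑ j ∈ Finset.range m, (u' ((↑(j+1))/(m:ℝ)) - u' ((j:ℝ)/(m:ℝ)))
              * max (z - (j:ℝ)/(m:ℝ)) 0 := rfl
      have hP2 : P m v' (-z)
          = ∑ j ∈ Finset.range m, (v' ((↑(j+1))/(m:ℝ)) - v' ((j:ℝ)/(m:ℝ)))
              * max (-z - (j:ℝ)/(m:ℝ)) 0 := rfl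
      rw [hP1, hP2]
      field_simp
    refine ⟨fun k => A k.val, fun k => B k.val, fun k => E k.val, ?_, ?_, ?_, ?_, ?_⟩
    · -- |a k| ≤ 8 C
      intro k
      rw [hA]
      dsimp only
      have haux : ∀ (w : ℝ → ℝ), (∀ x y, |w x - w y| ≤ 2*C*|x-y|) → ∀ j : ℕ,
          |2*(m:ℝ)*(w ((↑(j+1))/(m:ℝ)) - w ((j:ℝ)/(m:ℝ)))| ≤ 8*C := by
        intro w hw j
        have h1 := hw ((↑(j+1):ℝ)/(m:ℝ)) ((j:ℝ)/(m:ℝ))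
        rw [hstep j, abs_of_pos (by positivity : (0:ℝ) < 1/m)] at h1
        rw [abs_mul, abs_of_pos (by positivity : (0:ℝ) < 2*(m:ℝ))]
        have h2 : 2*(m:ℝ) * |w ((↑(j+1):ℝ)/(m:ℝ)) - w ((j:ℝ)/(m:ℝ))| ≤ 2*(m:ℝ)*(2*C*(1/m)) := by
          gcongr
        have h3 : 2*(m:ℝ)*(2*C*(1/m)) = 4*C := by field_simp; ring
        linarith
      split_ifs with h
      · exact le_trans (haux u' hlip k) (by linarith)
      · exact le_trans (haux v' hlipv (k.val - m)) (by linarith)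
    · -- εk = ±1
      intro k
      rw [hE]
      dsimp only
      split_ifs <;> simp
    · -- |bb k| ≤ 1
      intro k
      rw [hB]
      dsimp only
      split_ifs with h
      · rw [abs_neg, abs_of_nonneg (by positivity)]
        rw [div_le_one hmR]
        exact_mod_cast h.le
      · rw [abs_neg, abs_of_nonneg (by positivity)]
        rw [div_le_one hmR]
        have hk2 : k.val < 2*m := k.isLt
        have : k.val - m ≤ m := by omega
        exact_mod_cast this
    · -- sup-norm bound
      intro z hz
      rw [hsum z]
      rcases le_or_gt 0 z with h0 | h0
      · have hQ : P m v' (-z) = 0 := P_nonpos (by linarith)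
        have hmain := P_approx hm hd hgt0 hu'0 hL hlip m le_rfl z h0
          (by rw [hone]; exact hz.2)
        rw [hQ, add_zero]
        calc |gt z - P m u' z| ≤ 2*C*z/m := hmain
          _ ≤ 4*C/m := by
            rw [div_le_div_iff₀ hmR hmR]
            nlinarith [mul_nonneg (mul_nonneg hC.le hmR.le) (sub_nonneg.mpr hz.2),
              mul_nonneg hC.le hmR.le]
      · have hPz : P m u' z = 0 := P_nonpos h0.le
        have hmain := P_approx hm hud hgtn0 hv'0 hL hlipv m le_rfl (-z) (by linarith)
          (by rw [hone]; linarith [hz.1])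
        rw [neg_neg] at hmain
        rw [hPz, zero_add]
        have hmz : -z ≤ 1 := by linarith [hz.1]
        calc |gt z - P m v' (-z)| ≤ 2*C*(-z)/m := hmain
          _ ≤ 4*C/m := by
            rw [div_le_div_iff₀ hmR hmR]
            nlinarith [mul_nonneg (mul_nonneg hC.le hmR.le) (sub_nonneg.mpr hmz),
              mul_nonneg hC.le hmR.le]
    · -- derivative bound a.e.
      obtain ⟨S, hSdef⟩ : ∃ S : Set ℝ, S = (fun j : ℕ => ((j:ℝ)/(m:ℝ))) '' (Set.Iic m)
          ∪ (fun j : ℕ => -((j:ℝ)/(m:ℝ))) '' (Set.Iic m) := ⟨_, rfl⟩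
      have hSfin : S.Finite := by
        rw [hSdef]
        exact ((Set.finite_Iic m).image _).union ((Set.finite_Iic m).image _)
      have hS0 : volume S = 0 := hSfin.measure_zero _
      have hS0' : (volume.restrict (Set.Icc (-1:ℝ) 1)) S = 0 := by
        rw [Measure.restrict_apply hSfin.measurableSet]
        exact measure_mono_null Set.inter_subset_left hS0
      have h1 : ∀ᵐ z ∂(volume.restrict (Set.Icc (-1:ℝ) 1)), z ∉ S := by
        rw [MeasureTheory.ae_iff]
        have he : {a : ℝ | ¬ a ∉ S} = S := by ext a; simp
        rw [he]; exact hS0'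
      have h2 : ∀ᵐ z ∂(volume.restrict (Set.Icc (-1:ℝ) 1)), z ∈ Set.Icc (-1:ℝ) 1 :=
        ae_restrict_mem measurableSet_Icc
      filter_upwards [h1, h2] with z hzS hzI
      have hzne : ∀ j : ℕ, j ≤ m → z ≠ (j:ℝ)/m := by
        intro j hj he
        exact hzS (by rw [hSdef]; exact Or.inl ⟨j, hj, he.symm⟩)
      have hzne' : ∀ j : ℕ, j ≤ m → z ≠ -((j:ℝ)/m) := by
        intro j hj he
        exact hzS (by rw [hSdef]; exact Or.inr ⟨j, hj, he.symm⟩)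
      have hz0 : z ≠ 0 := by
        have := hzne 0 (Nat.zero_le m); simpa using this
      have hz1' : z ≠ 1 := by
        have := hzne m le_rfl; rwa [div_self hmR.ne'] at this
      have hzm1 : z ≠ -1 := by
        have := hzne' m le_rfl; rwa [div_self hmR.ne'] at this
      have hDeq : deriv (fun w => (1 / (2 * (m:ℝ))) *
            ∑ k : Fin (2*m), A k.val * max (E k.val * w + B k.val) 0) z
          = deriv (fun w => P m u' w + P m v' (-w)) z :=
        Filter.EventuallyEq.deriv_eq (Filter.Eventually.of_forall hsum)
      rw [hDeq, (hd z).deriv]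
      rcases lt_or_gt_of_ne hz0 with hneg | hpos
      · -- z < 0
        have hzgt : -1 < z := lt_of_le_of_ne hzI.1 (Ne.symm hzm1)
        have hw1 : 0 < -z := by linarith
        have hw2 : -z < 1 := by linarith
        obtain ⟨i, hifl⟩ : ∃ i : ℕ, i = ⌊(m:ℝ)*(-z)⌋₊ := ⟨_, rfl⟩
        have hfl1 : (i:ℝ) ≤ (m:ℝ)*(-z) := by rw [hifl]; exact Nat.floor_le (by positivity)
        have hfl2 : (m:ℝ)*(-z) < i+1 := by rw [hifl]; exact Nat.lt_floor_add_one _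
        have him : i < m := by
          rw [hifl]
          have hlt : (m:ℝ)*(-z) < (m:ℕ) := by push_cast; nlinarith
          exact (Nat.floor_lt (by positivity)).mpr hlt
        have hle : (i:ℝ)/m ≤ -z := by
          rw [div_le_iff₀ hmR]; nlinarith
        have hlt1 : (i:ℝ)/m < -z := by
          refine hle.lt_of_ne fun h => ?_
          exact hzne' i him.le (by linarith)
        have hlt2 : -z < (↑(i+1):ℝ)/m := by
          rw [lt_div_iff₀ hmR]; push_cast; nlinarith
        have hstepi : (↑(i+1):ℝ)/(m:ℝ) - (i:ℝ)/(m:ℝ) = 1/m := hstep i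
        have ev : (fun w => P m u' w + P m v' (-w)) =ᶠ[nhds z]
            (fun w => P m v' ((i:ℝ)/m) + (-w - (i:ℝ)/m) * v' ((↑(i+1):ℝ)/m)) := by
          filter_upwards [Ioo_mem_nhds (show -((↑(i+1):ℝ)/m) < z by linarith)
            (show z < -((i:ℝ)/m) by linarith)] with w hw
          have hcell := P_cell hm hv'0 i him (-w) (by linarith [hw.2]) (by linarith [hw.1])
          have hP0 : P m u' w = 0 := by
            refine P_nonpos ?_
            have : (0:ℝ) ≤ (i:ℝ)/m := by positivity
            linarith [hw.2]
          rw [hP0, hcell, zero_add]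
        rw [ev.deriv_eq, deriv_affine_neg]
        have hval : -(v' ((↑(i+1):ℝ)/m)) = u' (-((↑(i+1):ℝ)/m)) := by
          rw [hv']; simp
        rw [hval]
        have hub := hlip z (-((↑(i+1):ℝ)/m))
        have habs : |z - -((↑(i+1):ℝ)/m)| ≤ 1/m := by
          rw [abs_of_nonneg (by linarith)]
          linarith
        calc |u' z - u' (-((↑(i+1):ℝ)/m))| ≤ 2*C*|z - -((↑(i+1):ℝ)/m)| := hub
          _ ≤ 2*C*(1/m) := by gcongr
          _ ≤ 4*C/m := by
            rw [show 2*C*(1/(m:ℝ)) = 2*C/m by ring, div_le_div_iff₀ hmR hmR]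
            nlinarith
      · -- z > 0
        have hzlt : z < 1 := lt_of_le_of_ne hzI.2 hz1'
        obtain ⟨i, hifl⟩ : ∃ i : ℕ, i = ⌊(m:ℝ)*z⌋₊ := ⟨_, rfl⟩
        have hfl1 : (i:ℝ) ≤ (m:ℝ)*z := by rw [hifl]; exact Nat.floor_le (by positivity)
        have hfl2 : (m:ℝ)*z < i+1 := by rw [hifl]; exact Nat.lt_floor_add_one _
        have him : i < m := by
          rw [hifl]
          have hlt : (m:ℝ)*z < (m:ℕ) := by push_cast; nlinarith
          exact (Nat.floor_lt (by positivity)).mpr hlt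
        have hle : (i:ℝ)/m ≤ z := by
          rw [div_le_iff₀ hmR]; nlinarith
        have hlt1 : (i:ℝ)/m < z := hle.lt_of_ne fun h => hzne i him.le h.symm
        have hlt2 : z < (↑(i+1):ℝ)/m := by
          rw [lt_div_iff₀ hmR]; push_cast; nlinarith
        have hstepi : (↑(i+1):ℝ)/(m:ℝ) - (i:ℝ)/(m:ℝ) = 1/m := hstep i
        have ev : (fun w => P m u' w + P m v' (-w)) =ᶠ[nhds z]
            (fun w => P m u' ((i:ℝ)/m) + (w - (i:ℝ)/m) * u' ((↑(i+1):ℝ)/m)) := by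
          filter_upwards [Ioo_mem_nhds hlt1 hlt2] with w hw
          have hcell := P_cell hm hu'0 i him w hw.1.le hw.2.le
          have hQ0 : P m v' (-w) = 0 := by
            refine P_nonpos ?_
            have : (0:ℝ) ≤ (i:ℝ)/m := by positivity
            linarith [hw.1]
          rw [hcell, hQ0, add_zero]
        rw [ev.deriv_eq, deriv_affine]
        have hub := hlip z ((↑(i+1):ℝ)/m)
        have habs : |z - (↑(i+1):ℝ)/m| ≤ 1/m := by
          rw [abs_sub_comm, abs_of_nonneg (by linarith)]
          linarith
        calc |u' z - u' ((↑(i+1):ℝ)/m)| ≤ 2*C*|z - (↑(i+1):ℝ)/m| := hub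
          _ ≤ 2*C*(1/m) := by gcongr
          _ ≤ 4*C/m := by
            rw [show 2*C*(1/(m:ℝ)) = 2*C/m by ring, div_le_div_iff₀ hmR hmR]
            nlinarith
end
end
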